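/- arXiv:1810.06216 — 2 statements merged into one kernel-verified Lean document; each statement's English description precedes it below -/
import Mathlib

section
/- Let τ = (1-√5)/2, α ≥ 0, λ ≥ 0, γ ∈ ℂ\{0}, and suppose f(z) = z + a₂z² + a₃z³ + … is a bi-univalent function on the unit disk such that both F(z) := 1 + (1/γ)((1-α+2λ)f(z)/z + (α-2λ)f'(z) + λz f''(z) - 1) and the corresponding expression G for g = f⁻¹ are subordinate to p̃(z) = (1+τ²z²)/(1-τz-τ²z²). Then |a₂| ≤ |γ||τ| / √(γτ(1+2α+2λ) + (1-3τ)(1+α)²). -/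
/-!
Write `f(z) = z + a₂z² + a₃z³ + ⋯` and let `w₁, w₂` be the Schwarz functions of the two
subordinations. Since `p̃(z) = 1 + τz + 3τ²z² + ⋯`, comparing the first two Taylor coefficients
gives `(1 + α) a₂ = γτ c₁` and `(1 + 2α + 2λ) a₃ = γ(τ c₂ + 3τ² c₁²)`, and the same for
`g = f⁻¹`, whose coefficients are `-a₂` and `2a₂² - a₃`. Adding the two second-order relations
and eliminating `c₁², d₁²` with the first-order ones gives
`2a₂² (γτ(1 + 2α + 2λ) + (1 - 3τ)(1 + α)²) = γ²τ²(c₂ + d₂) + 2(1 + α)²a₂²`,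
and the Schwarz–Pick bound `|c₂| ≤ 1 - |c₁|²` closes the estimate.
-/

open Complex ComplexConjugate Metric Set Filter Topology

section Jets
variable {𝕜 : Type*} [NontriviallyNormedField 𝕜]

theorem iteratedDeriv_succ_id_mul_zero {h : 𝕜 → 𝕜} {n : ℕ} (hh : ContDiffAt 𝕜 (n + 1) h 0) :
    iteratedDeriv (n + 1) (fun z => z * h z) 0 = (n + 1) * iteratedDeriv n h 0 := by
  rw [iteratedDeriv_fun_mul (f := fun z => z) contDiffAt_fun_id hh, Finset.sum_eq_single 1]
  · simp [iteratedDeriv_fun_id_zero]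
  · intro i _ hi
    simp [iteratedDeriv_fun_id_zero, hi]
  · simp

theorem AnalyticAt.dslope {f : 𝕜 → 𝕜} {a : 𝕜} (hf : AnalyticAt 𝕜 f a) :
    AnalyticAt 𝕜 (dslope f a) a :=
  let ⟨_, hp⟩ := hf
  hp.has_fpower_series_dslope_fslope.analyticAt

theorem iteratedDeriv_dslope_zero [CompleteSpace 𝕜] [CharZero 𝕜] {f : 𝕜 → 𝕜}
    (hf : AnalyticAt 𝕜 f 0) (n : ℕ) :
    iteratedDeriv n (dslope f 0) 0 = iteratedDeriv (n + 1) f 0 / (n + 1) := by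
  have hf_eq : f = fun z => f 0 + z * dslope f 0 z := funext fun z => by
    have := sub_smul_dslope f 0 z
    rw [sub_zero, smul_eq_mul] at this
    rw [this, add_sub_cancel]
  have : iteratedDeriv (n + 1) f 0 = (n + 1) * iteratedDeriv n (dslope f 0) 0 := by
    rw [hf_eq, iteratedDeriv_const_add n.succ_pos, ← hf_eq,
      iteratedDeriv_succ_id_mul_zero hf.dslope.contDiffAt]
  rw [this, mul_div_cancel_left₀ _ (by exact_mod_cast n.succ_ne_zero)]

theorem iteratedDeriv_of_comp_eventuallyEq_id {f g : 𝕜 → 𝕜} {x : 𝕜} (hf : ContDiffAt 𝕜 3 f x)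
    (hg : ContDiffAt 𝕜 3 g (f x)) (hf1 : deriv f x = 1) (hgf : g ∘ f =ᶠ[𝓝 x] id) :
    deriv g (f x) = 1 ∧ iteratedDeriv 2 g (f x) = -iteratedDeriv 2 f x ∧
      iteratedDeriv 3 g (f x) = 3 * iteratedDeriv 2 f x ^ 2 - iteratedDeriv 3 f x := by
  have h1 : deriv (g ∘ f) x = 1 := by rw [hgf.deriv_eq, deriv_id]
  have h2 : iteratedDeriv 2 (g ∘ f) x = 0 := by simp [hgf.iteratedDeriv_eq, iteratedDeriv_id]
  have h3 : iteratedDeriv 3 (g ∘ f) x = 0 := by simp [hgf.iteratedDeriv_eq, iteratedDeriv_id]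
  rw [deriv_comp x (hg.differentiableAt (by norm_num)) (hf.differentiableAt (by norm_num)),
    hf1, mul_one] at h1
  rw [iteratedDeriv_comp_two (hg.of_le (by norm_num)) (hf.of_le (by norm_num)), h1, hf1] at h2
  rw [iteratedDeriv_comp_three hg hf, h1, hf1] at h3
  refine ⟨h1, by linear_combination h2, ?_⟩
  linear_combination h3 - 3 * iteratedDeriv 2 f x * h2

end Jets

noncomputable def shellLike (t z : ℂ) : ℂ := (1 + t ^ 2 * z ^ 2) / (1 - t * z - t ^ 2 * z ^ 2)

namespace shellLike
variable (t : ℂ)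

theorem eventuallyEq_one_add_mul :
    shellLike t =ᶠ[𝓝 0] fun z => 1 + z * ((t + 2 * t ^ 2 * z) / (1 - t * z - t ^ 2 * z ^ 2)) := by
  have hcont : Continuous fun z : ℂ => 1 - t * z - t ^ 2 * z ^ 2 := by fun_prop
  filter_upwards [hcont.continuousAt.eventually_ne
    (show (1 - t * 0 - t ^ 2 * 0 ^ 2 : ℂ) ≠ 0 by simp)] with z hz
  rw [shellLike]
  field_simp
  ring

theorem analyticAt : AnalyticAt ℂ (shellLike t) 0 := by
  unfold shellLike
  apply AnalyticAt.div <;> first | fun_prop | simp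

theorem apply_zero : shellLike t 0 = 1 := by simp [shellLike]

theorem iteratedDeriv_succ_zero (n : ℕ) :
    iteratedDeriv (n + 1) (shellLike t) 0 =
      (n + 1) * iteratedDeriv n (fun z => (t + 2 * t ^ 2 * z) / (1 - t * z - t ^ 2 * z ^ 2)) 0 := by
  have hh : AnalyticAt ℂ (fun z => (t + 2 * t ^ 2 * z) / (1 - t * z - t ^ 2 * z ^ 2)) 0 := by
    apply AnalyticAt.div <;> first | fun_prop | simp
  rw [(eventuallyEq_one_add_mul t).iteratedDeriv_eq, iteratedDeriv_const_add n.succ_pos,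
    iteratedDeriv_succ_id_mul_zero hh.contDiffAt]

theorem deriv_zero : deriv (shellLike t) 0 = t := by
  simpa using iteratedDeriv_succ_zero t 0

theorem iteratedDeriv_two_zero : iteratedDeriv 2 (shellLike t) 0 = 6 * t ^ 2 := by
  have hnum : HasDerivAt (fun z : ℂ => t + 2 * t ^ 2 * z) (2 * t ^ 2) 0 := by
    simpa using ((hasDerivAt_id' (0 : ℂ)).const_mul (2 * t ^ 2)).const_add t
  have hden : HasDerivAt (fun z : ℂ => 1 - t * z - t ^ 2 * z ^ 2) (-t) 0 := by
    simpa using (((hasDerivAt_id' (0 : ℂ)).const_mul t).const_sub 1).fun_sub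
      ((hasDerivAt_pow 2 (0 : ℂ)).const_mul (t ^ 2))
  rw [iteratedDeriv_succ_zero t 1, iteratedDeriv_one, (hnum.fun_div hden (by simp)).deriv]
  push_cast
  ring

end shellLike

-- `f z / z` is continued to `z = 0` by `dslope f 0`.
noncomputable def diffOperator (a b c : ℂ) (f : ℂ → ℂ) (z : ℂ) : ℂ :=
  a * dslope f 0 z + b * deriv f z + c * z * iteratedDeriv 2 f z

theorem iteratedDeriv_succ_diffOperator_zero (a b c : ℂ) {f : ℂ → ℂ} (hf : AnalyticAt ℂ f 0)
    (n : ℕ) : iteratedDeriv (n + 1) (diffOperator a b c f) 0 =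
      (a / (n + 2) + b + (n + 1) * c) * iteratedDeriv (n + 2) f 0 := by
  have hq := hf.dslope
  have hf' := hf.deriv
  have hf2 : AnalyticAt ℂ (iteratedDeriv 2 f) 0 := by
    rw [iteratedDeriv_eq_iterate]
    exact hf.iterated_deriv 2
  have hdiff : iteratedDeriv n (iteratedDeriv 2 f) 0 = iteratedDeriv (n + 2) f 0 := by
    simp only [iteratedDeriv_eq_iterate, ← Function.iterate_add_apply]
  unfold diffOperator
  simp only [mul_assoc c]
  rw [iteratedDeriv_fun_add ?_ ?_, iteratedDeriv_fun_add ?_ ?_, iteratedDeriv_const_mul_field,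
    iteratedDeriv_const_mul_field, iteratedDeriv_const_mul_field, iteratedDeriv_dslope_zero hf,
    ← iteratedDeriv_succ', iteratedDeriv_succ_id_mul_zero hf2.contDiffAt, hdiff]
  · push_cast; field_simp; ring
  all_goals exact AnalyticAt.contDiffAt (by fun_prop)

theorem coeff_relations_of_subordinate {γ t a b c : ℂ} (hγ : γ ≠ 0) (hab : a + b = 1)
    {f w : ℂ → ℂ} (hf : AnalyticAt ℂ f 0) (hf0 : f 0 = 0) (hf1 : deriv f 0 = 1)
    (hw : AnalyticAt ℂ w 0) (hw0 : w 0 = 0)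
    (hsub : ∀ᶠ z in 𝓝[≠] 0, 1 + (1 / γ) * (a * (f z / z) + b * deriv f z
      + c * z * iteratedDeriv 2 f z - 1) = shellLike t (w z)) :
    (a / 2 + b + c) * iteratedDeriv 2 f 0 = γ * (t * deriv w 0) ∧
      (a / 3 + b + 2 * c) * iteratedDeriv 3 f 0 =
        γ * (6 * t ^ 2 * deriv w 0 ^ 2 + t * iteratedDeriv 2 w 0) := by
  have hop : diffOperator a b c f =ᶠ[𝓝 0] fun z => (1 - γ) + γ * shellLike t (w z) := by
    rw [EventuallyEq, ← nhdsNE_sup_pure, eventually_sup, eventually_pure]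
    refine ⟨?_, by simp [diffOperator, hf1, hw0, shellLike.apply_zero, hab]⟩
    filter_upwards [hsub, self_mem_nhdsWithin] with z hz hz0
    rw [diffOperator, dslope_of_ne f hz0, slope_def_field, hf0, sub_zero, sub_zero, ← hz]
    field_simp
    ring
  have hcomp : ∀ n, 0 < n →
      iteratedDeriv n (diffOperator a b c f) 0 = γ * iteratedDeriv n (shellLike t ∘ w) 0 := by
    intro n hn
    rw [hop.iteratedDeriv_eq, iteratedDeriv_const_add hn, iteratedDeriv_const_mul_field]
    rfl
  have hP : ContDiffAt ℂ 2 (shellLike t) (w 0) := by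
    rw [hw0]; exact (shellLike.analyticAt t).contDiffAt
  constructor
  · have h1 := hcomp 1 one_pos
    rw [iteratedDeriv_succ_diffOperator_zero a b c hf 0, iteratedDeriv_one,
      deriv_comp 0 (hP.differentiableAt two_ne_zero) hw.differentiableAt, hw0,
      shellLike.deriv_zero] at h1
    norm_num at h1
    exact h1
  · have h2 := hcomp 2 two_pos
    rw [iteratedDeriv_succ_diffOperator_zero a b c hf 1, iteratedDeriv_comp_two hP hw.contDiffAt,
      hw0, shellLike.deriv_zero, shellLike.iteratedDeriv_two_zero] at h2
    norm_num at h2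
    exact h2

theorem norm_sub_div_one_sub_conj_mul_le_one {a b : ℂ} (ha : ‖a‖ ≤ 1) (hb : ‖b‖ ≤ 1) :
    ‖(a - b) / (1 - conj b * a)‖ ≤ 1 := by
  have key : ‖1 - conj b * a‖ ^ 2 - ‖a - b‖ ^ 2 = (1 - ‖a‖ ^ 2) * (1 - ‖b‖ ^ 2) := by
    simp only [Complex.sq_norm, Complex.normSq_apply, sub_re, sub_im, mul_re, mul_im, conj_re,
      conj_im, one_re, one_im]
    ring
  have hsq : ‖a - b‖ ^ 2 ≤ ‖1 - conj b * a‖ ^ 2 := by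
    nlinarith [mul_nonneg (sub_nonneg.2 (pow_le_one₀ (n := 2) (norm_nonneg a) ha))
      (sub_nonneg.2 (pow_le_one₀ (n := 2) (norm_nonneg b) hb))]
  rw [norm_div]
  exact div_le_one_of_le₀
    ((pow_le_pow_iff_left₀ (norm_nonneg _) (norm_nonneg _) two_ne_zero).1 hsq) (norm_nonneg _)

theorem norm_deriv_le_one_sub_sq_of_mapsTo_unitBall {φ : ℂ → ℂ}
    (hd : DifferentiableOn ℂ φ (ball 0 1)) (hmaps : MapsTo φ (ball 0 1) (closedBall 0 1)) :
    ‖deriv φ 0‖ ≤ 1 - ‖φ 0‖ ^ 2 := by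
  have h0 : (0 : ℂ) ∈ ball (0 : ℂ) 1 := mem_ball_self one_pos
  have hφ1 : ∀ z ∈ ball (0 : ℂ) 1, ‖φ z‖ ≤ 1 := fun z hz => by simpa using hmaps hz
  set b := φ 0
  rcases (hφ1 0 h0).lt_or_eq with hb | hb
  -- Compose with the disc automorphism moving `φ 0` to `0` and apply the Schwarz lemma.
  · have hden : ∀ z ∈ ball (0 : ℂ) 1, 1 - conj b * φ z ≠ 0 := by
      intro z hz h
      have : ‖conj b * φ z‖ < 1 := by
        rw [norm_mul, RCLike.norm_conj]
        exact mul_lt_one_of_nonneg_of_lt_one_left (norm_nonneg _) hb (hφ1 z hz)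
      rw [← sub_eq_zero.1 h, norm_one] at this
      exact this.false
    set ψ : ℂ → ℂ := fun z => (φ z - b) / (1 - conj b * φ z)
    have hψ : DifferentiableOn ℂ ψ (ball 0 1) :=
      (hd.sub_const b).div ((differentiableOn_const 1).sub (hd.const_mul _)) hden
    have hψmaps : MapsTo ψ (ball 0 1) (closedBall (ψ 0) 1) := fun z hz => by
      simpa [ψ, b] using norm_sub_div_one_sub_conj_mul_le_one (hφ1 z hz) hb.le
    have hnb : (1 : ℂ) - conj b * b = ((1 - ‖b‖ ^ 2 : ℝ) : ℂ) := by
      rw [Complex.conj_mul']; push_cast; ring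
    have hpos : 0 < 1 - ‖b‖ ^ 2 := by nlinarith [norm_nonneg b]
    have hφd : HasDerivAt φ (deriv φ 0) 0 :=
      (hd.differentiableAt (ball_mem_nhds 0 one_pos)).hasDerivAt
    have hψd : deriv ψ 0 = deriv φ 0 / ((1 - ‖b‖ ^ 2 : ℝ) : ℂ) := by
      have := ((hφd.sub_const b).fun_div ((hasDerivAt_const 0 1).fun_sub
        (hφd.const_mul (conj b))) (hden 0 h0)).deriv
      have hne : ((1 - ‖b‖ ^ 2 : ℝ) : ℂ) ≠ 0 := by exact_mod_cast hpos.ne'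
      rw [this, sub_self, zero_mul, sub_zero, hnb]
      field_simp
    have := norm_deriv_le_one_of_mapsTo_ball hψ hψmaps one_pos
    rwa [hψd, norm_div, Complex.norm_real, Real.norm_of_nonneg hpos.le, div_le_one hpos] at this
  -- `‖φ‖` attains its maximum at the interior point `0`, so `φ` is constant.
  · have hmax : IsMaxOn (norm ∘ φ) (ball 0 1) 0 := fun z hz => by
      simpa [hb] using hφ1 z hz
    have hconst : φ =ᶠ[𝓝 0] fun _ => b := by
      filter_upwards [ball_mem_nhds (0 : ℂ) one_pos] with z hz
      exact Complex.eqOn_of_isPreconnected_of_isMaxOn_norm (convex_ball 0 1).isPreconnected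
        isOpen_ball hd h0 hmax hz
    rw [hconst.deriv_eq, deriv_const, norm_zero, show ‖b‖ = 1 from hb]
    norm_num

theorem norm_iteratedDeriv_two_div_two_le {w : ℂ → ℂ} (hd : DifferentiableOn ℂ w (ball 0 1))
    (hw0 : w 0 = 0) (hw1 : ∀ z ∈ ball (0 : ℂ) 1, ‖w z‖ ≤ 1) :
    ‖iteratedDeriv 2 w 0 / 2‖ ≤ 1 - ‖deriv w 0‖ ^ 2 := by
  have hball : ball (0 : ℂ) 1 ∈ 𝓝 0 := ball_mem_nhds 0 one_pos
  have hslope : MapsTo (dslope w 0) (ball 0 1) (closedBall 0 1) := fun z hz => by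
    simpa using norm_dslope_le_div_of_mapsTo_ball hd
      (fun y hy => by simpa [hw0] using hw1 y hy) hz
  have := norm_deriv_le_one_sub_sq_of_mapsTo_unitBall
    ((Complex.differentiableOn_dslope hball).2 hd) hslope
  rw [← iteratedDeriv_one, iteratedDeriv_dslope_zero (hd.analyticAt hball), dslope_same] at this
  norm_num at this ⊢
  exact this

theorem norm_sq_mul_norm_le_of_coeff_relations {γ t u v a₂ a₃ c₁ c₂ d₁ d₂ : ℂ}
    (hc₁ : u * a₂ = γ * (t * c₁)) (hd₁ : u * -a₂ = γ * (t * d₁))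
    (hc₂ : v * a₃ = γ * (3 * t ^ 2 * c₁ ^ 2 + t * c₂))
    (hd₂ : v * (2 * a₂ ^ 2 - a₃) = γ * (3 * t ^ 2 * d₁ ^ 2 + t * d₂))
    (hc : ‖c₂‖ ≤ 1 - ‖c₁‖ ^ 2) (hd : ‖d₂‖ ≤ 1 - ‖d₁‖ ^ 2) :
    ‖a₂‖ ^ 2 * ‖γ * t * v + (1 - 3 * t) * u ^ 2‖ ≤ ‖γ * t‖ ^ 2 := by
  have key : 2 * a₂ ^ 2 * (γ * t * v + (1 - 3 * t) * u ^ 2) =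
      (γ * t) ^ 2 * (c₂ + d₂) + 2 * (u * a₂) ^ 2 := by
    linear_combination γ * t * (hc₂ + hd₂) - 3 * t * ((u * a₂ + γ * t * c₁) * hc₁
      + (-(u * a₂) + γ * t * d₁) * hd₁)
  have hnc : ‖u * a₂‖ = ‖γ * t‖ * ‖c₁‖ := by rw [hc₁, ← mul_assoc, norm_mul]
  have hnd : ‖u * a₂‖ = ‖γ * t‖ * ‖d₁‖ := by rw [← norm_neg, ← mul_neg, hd₁, ← mul_assoc, norm_mul]
  have hsq : ‖u * a₂‖ ^ 2 + ‖u * a₂‖ ^ 2 = ‖γ * t‖ ^ 2 * (‖c₁‖ ^ 2 + ‖d₁‖ ^ 2) := by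
    nth_rw 1 [hnc]
    rw [hnd]
    ring
  have : 2 * (‖a₂‖ ^ 2 * ‖γ * t * v + (1 - 3 * t) * u ^ 2‖) ≤ 2 * ‖γ * t‖ ^ 2 :=
    calc 2 * (‖a₂‖ ^ 2 * ‖γ * t * v + (1 - 3 * t) * u ^ 2‖)
        = ‖(γ * t) ^ 2 * (c₂ + d₂) + 2 * (u * a₂) ^ 2‖ := by
          rw [← key, norm_mul, norm_mul, norm_pow, Complex.norm_two]
          ring
      _ ≤ ‖γ * t‖ ^ 2 * (‖c₂‖ + ‖d₂‖) + (‖u * a₂‖ ^ 2 + ‖u * a₂‖ ^ 2) := by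
          refine (norm_add_le _ _).trans (add_le_add ?_ ?_)
          · rw [norm_mul, norm_pow]
            exact mul_le_mul_of_nonneg_left (norm_add_le _ _) (sq_nonneg _)
          · rw [norm_mul, norm_pow, Complex.norm_two, two_mul]
      _ ≤ ‖γ * t‖ ^ 2 * ((1 - ‖c₁‖ ^ 2) + (1 - ‖d₁‖ ^ 2)) + (‖u * a₂‖ ^ 2 + ‖u * a₂‖ ^ 2) := by
          gcongr
      _ = 2 * ‖γ * t‖ ^ 2 := by rw [hsq]; ring
  linarith

theorem le_div_sqrt_of_sq_mul_le {x M R : ℝ} (hR : 0 < R) (hM : 0 ≤ M) (h : x ^ 2 * R ≤ M ^ 2) :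
    x ≤ M / √R := by
  rw [le_div_iff₀ (Real.sqrt_pos.2 hR)]
  calc x * √R ≤ |x| * √R := by gcongr; exact le_abs_self x
    _ = √(x ^ 2 * R) := by rw [Real.sqrt_mul' _ hR.le, Real.sqrt_sq_eq_abs]
    _ ≤ √(M ^ 2) := Real.sqrt_le_sqrt h
    _ = M := Real.sqrt_sq hM

theorem WSL_second_coeff_bound_general (τ : ℝ)
    (γ : ℂ) (hγ : γ ≠ 0) (α lam : ℝ)
    (f g : ℂ → ℂ)
    (hf : AnalyticOnNhd ℂ f (Metric.ball 0 1))
    (hf0 : f 0 = 0) (hf1 : deriv f 0 = 1)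
    (hg : AnalyticOnNhd ℂ g (Metric.ball 0 1))
    (hg0 : g 0 = 0)
    (hgf : ∀ z ∈ Metric.ball (0 : ℂ) 1, f z ∈ Metric.ball (0 : ℂ) 1 → g (f z) = z)
    (p : ℂ → ℂ)
    (hp : ∀ z : ℂ, p z =
      (1 + (τ : ℂ) ^ 2 * z ^ 2) / (1 - (τ : ℂ) * z - (τ : ℂ) ^ 2 * z ^ 2))
    (hsubf : ∃ w : ℂ → ℂ, AnalyticOnNhd ℂ w (Metric.ball 0 1) ∧ w 0 = 0 ∧
      (∀ z ∈ Metric.ball (0 : ℂ) 1, ‖w z‖ < 1) ∧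
      ∀ z ∈ Metric.ball (0 : ℂ) 1, z ≠ 0 →
        1 + (1 / γ) * ((1 - (α : ℂ) + 2 * (lam : ℂ)) * (f z / z)
          + ((α : ℂ) - 2 * (lam : ℂ)) * deriv f z
          + (lam : ℂ) * z * iteratedDeriv 2 f z - 1) = p (w z))
    (hsubg : ∃ w : ℂ → ℂ, AnalyticOnNhd ℂ w (Metric.ball 0 1) ∧ w 0 = 0 ∧
      (∀ z ∈ Metric.ball (0 : ℂ) 1, ‖w z‖ < 1) ∧
      ∀ z ∈ Metric.ball (0 : ℂ) 1, z ≠ 0 →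
        1 + (1 / γ) * ((1 - (α : ℂ) + 2 * (lam : ℂ)) * (g z / z)
          + ((α : ℂ) - 2 * (lam : ℂ)) * deriv g z
          + (lam : ℂ) * z * iteratedDeriv 2 g z - 1) = p (w z))
    (hRpos : 0 < (γ * (τ : ℂ) * (1 + 2 * (α : ℂ) + 2 * (lam : ℂ))
        + (1 - 3 * (τ : ℂ)) * (1 + (α : ℂ)) ^ 2).re) :
    ‖iteratedDeriv 2 f 0 / 2‖ ≤ ‖γ‖ * |τ| /
      Real.sqrt ((γ * (τ : ℂ) * (1 + 2 * (α : ℂ) + 2 * (lam : ℂ))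
        + (1 - 3 * (τ : ℂ)) * (1 + (α : ℂ)) ^ 2).re) := by
  have hball : ball (0 : ℂ) 1 ∈ 𝓝 0 := ball_mem_nhds 0 one_pos
  have h0 : (0 : ℂ) ∈ ball (0 : ℂ) 1 := mem_ball_self one_pos
  obtain rfl : p = shellLike τ := funext hp
  have hgf' : g ∘ f =ᶠ[𝓝 0] id := by
    have hf_ball : f ⁻¹' ball 0 1 ∈ 𝓝 0 :=
      (hf 0 h0).continuousAt.preimage_mem_nhds (by rwa [hf0])
    filter_upwards [hball, hf_ball] with z hz hfz using hgf z hz hfz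
  obtain ⟨hg1, hg2, hg3⟩ := iteratedDeriv_of_comp_eventuallyEq_id (hf 0 h0).contDiffAt
    (by rw [hf0]; exact (hg 0 h0).contDiffAt) hf1 hgf'
  rw [hf0] at hg1 hg2 hg3
  have punctured {P : ℂ → Prop} (h : ∀ z ∈ ball (0 : ℂ) 1, z ≠ 0 → P z) : ∀ᶠ z in 𝓝[≠] 0, P z :=
    eventually_nhdsWithin_iff.2 (eventually_of_mem hball h)
  obtain ⟨w₁, hw₁, hw₁0, hw₁1, hsub₁⟩ := hsubf
  obtain ⟨w₂, hw₂, hw₂0, hw₂1, hsub₂⟩ := hsubg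
  obtain ⟨hc₁, hc₂⟩ := coeff_relations_of_subordinate hγ (by ring) (hf 0 h0) hf0 hf1 (hw₁ 0 h0)
    hw₁0 (punctured hsub₁)
  obtain ⟨hd₁, hd₂⟩ := coeff_relations_of_subordinate hγ (by ring) (hg 0 h0) hg0 hg1 (hw₂ 0 h0)
    hw₂0 (punctured hsub₂)
  have hbound := norm_sq_mul_norm_le_of_coeff_relations (γ := γ) (t := τ) (u := 1 + (α : ℂ))
    (v := 1 + 2 * (α : ℂ) + 2 * (lam : ℂ)) (a₂ := iteratedDeriv 2 f 0 / 2)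
    (a₃ := iteratedDeriv 3 f 0 / 6)
    (by linear_combination hc₁) (by rw [hg2] at hd₁; linear_combination hd₁)
    (by linear_combination hc₂ / 2) (by rw [hg3] at hd₂; linear_combination hd₂ / 2)
    (norm_iteratedDeriv_two_div_two_le hw₁.differentiableOn hw₁0 fun z hz => (hw₁1 z hz).le)
    (norm_iteratedDeriv_two_div_two_le hw₂.differentiableOn hw₂0 fun z hz => (hw₂1 z hz).le)
  rw [norm_mul, Complex.norm_real, Real.norm_eq_abs] at hbound
  exact le_div_sqrt_of_sq_mul_le hRpos (by positivity)
    ((mul_le_mul_of_nonneg_left (re_le_norm _) (sq_nonneg _)).trans hbound)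

theorem WSL_second_coeff_bound (τ : ℝ) (hτ : τ = (1 - Real.sqrt 5) / 2)
    (γ : ℂ) (hγ : γ ≠ 0) (α lam : ℝ) (hα : 0 ≤ α) (hlam : 0 ≤ lam)
    (f g : ℂ → ℂ)
    (hf : AnalyticOnNhd ℂ f (Metric.ball 0 1))
    (hfi : Set.InjOn f (Metric.ball 0 1))
    (hf0 : f 0 = 0) (hf1 : deriv f 0 = 1)
    (hg : AnalyticOnNhd ℂ g (Metric.ball 0 1))
    (hgi : Set.InjOn g (Metric.ball 0 1)) (hg0 : g 0 = 0)
    (hgf : ∀ z ∈ Metric.ball (0 : ℂ) 1, f z ∈ Metric.ball (0 : ℂ) 1 → g (f z) = z)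
    (hfg : ∀ w ∈ Metric.ball (0 : ℂ) 1, g w ∈ Metric.ball (0 : ℂ) 1 → f (g w) = w)
    (p : ℂ → ℂ)
    (hp : ∀ z : ℂ, p z =
      (1 + (τ : ℂ) ^ 2 * z ^ 2) / (1 - (τ : ℂ) * z - (τ : ℂ) ^ 2 * z ^ 2))
    (hsubf : ∃ w : ℂ → ℂ, AnalyticOnNhd ℂ w (Metric.ball 0 1) ∧ w 0 = 0 ∧
      (∀ z ∈ Metric.ball (0 : ℂ) 1, ‖w z‖ < 1) ∧
      ∀ z ∈ Metric.ball (0 : ℂ) 1, z ≠ 0 →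
        1 + (1 / γ) * ((1 - (α : ℂ) + 2 * (lam : ℂ)) * (f z / z)
          + ((α : ℂ) - 2 * (lam : ℂ)) * deriv f z
          + (lam : ℂ) * z * iteratedDeriv 2 f z - 1) = p (w z))
    (hsubg : ∃ w : ℂ → ℂ, AnalyticOnNhd ℂ w (Metric.ball 0 1) ∧ w 0 = 0 ∧
      (∀ z ∈ Metric.ball (0 : ℂ) 1, ‖w z‖ < 1) ∧
      ∀ z ∈ Metric.ball (0 : ℂ) 1, z ≠ 0 →
        1 + (1 / γ) * ((1 - (α : ℂ) + 2 * (lam : ℂ)) * (g z / z)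
          + ((α : ℂ) - 2 * (lam : ℂ)) * deriv g z
          + (lam : ℂ) * z * iteratedDeriv 2 g z - 1) = p (w z))
    (hR : (γ * (τ : ℂ) * (1 + 2 * (α : ℂ) + 2 * (lam : ℂ))
        + (1 - 3 * (τ : ℂ)) * (1 + (α : ℂ)) ^ 2).im = 0)
    (hRpos : 0 < (γ * (τ : ℂ) * (1 + 2 * (α : ℂ) + 2 * (lam : ℂ))
        + (1 - 3 * (τ : ℂ)) * (1 + (α : ℂ)) ^ 2).re) :
    ‖iteratedDeriv 2 f 0 / 2‖ ≤ ‖γ‖ * |τ| /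
      Real.sqrt ((γ * (τ : ℂ) * (1 + 2 * (α : ℂ) + 2 * (lam : ℂ))
        + (1 - 3 * (τ : ℂ)) * (1 + (α : ℂ)) ^ 2).re) :=
  WSL_second_coeff_bound_general τ γ hγ α lam f g hf hf0 hf1 hg hg0 hgf p hp hsubf hsubg hRpos
end

section
/- Let τ = (1-√5)/2. The function p̃(z) = (1+τ²z²)/(1-τz-τ²z²) belongs to the class 𝒫(β) with β = √5/10; that is, Re p̃(z) > √5/10 for all z in the open unit disk where p̃ is defined. -/
/-!
Since `τ² = τ + 1`, the denominator factors as `(1 + z)(1 - τ²z)` and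
`p̃(z) = -1 + 1/(1 + z) + 1/(1 - τ²z)`. On `‖w‖ < r ≤ 1` the map `w ↦ 1/(1 + w)` has real part
above `1/(1 + r)`, so `Re p̃(z) > -1 + 1/2 + 1/(1 + τ²)`, and `1/(1 + τ²) = (5 + √5)/10`.
-/

open Real goldenRatio

namespace Complex

theorem one_add_ne_zero_of_norm_lt_one {w : ℂ} (hw : ‖w‖ < 1) : 1 + w ≠ 0 := by
  intro h
  rw [eq_neg_of_add_eq_zero_right h, norm_neg, norm_one] at hw
  exact lt_irrefl 1 hw

theorem one_div_one_add_norm_le_re_inv_one_add {w : ℂ} (hw : ‖w‖ < 1) :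
    1 / (1 + ‖w‖) ≤ ((1 + w)⁻¹).re := by
  have hre : -‖w‖ ≤ w.re := neg_le_of_abs_le (abs_re_le_norm w)
  have hnormSq : normSq (1 + w) = 1 + 2 * w.re + ‖w‖ ^ 2 := by
    rw [normSq_apply, Complex.sq_norm, normSq_apply]
    simp only [add_re, one_re, add_im, one_im]
    ring
  have hpos : 0 < normSq (1 + w) := by rw [hnormSq]; nlinarith [norm_nonneg w]
  rw [inv_re, add_re, one_re, div_le_div_iff₀ (by positivity) hpos, hnormSq]
  -- `(1 + ‖w‖)(1 + Re w) - |1 + w|² = (‖w‖ - Re w)(1 - ‖w‖)`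
  nlinarith [re_le_norm w]

theorem one_div_one_add_lt_re_inv_one_add {w : ℂ} {r : ℝ} (hwr : ‖w‖ < r) (hr : r ≤ 1) :
    1 / (1 + r) < ((1 + w)⁻¹).re :=
  calc 1 / (1 + r) < 1 / (1 + ‖w‖) := by gcongr
    _ ≤ ((1 + w)⁻¹).re := one_div_one_add_norm_le_re_inv_one_add (hwr.trans_le hr)

end Complex

theorem div_eq_partial_fractions_of_sq_eq_add_one {τ z : ℂ} (hτ : τ ^ 2 = τ + 1)
    (h₁ : 1 + z ≠ 0) (h₂ : 1 - τ ^ 2 * z ≠ 0) :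
    (1 + τ ^ 2 * z ^ 2) / (1 - τ * z - τ ^ 2 * z ^ 2) = -1 + (1 + z)⁻¹ + (1 - τ ^ 2 * z)⁻¹ := by
  have hfactor : 1 - τ * z - τ ^ 2 * z ^ 2 = (1 + z) * (1 - τ ^ 2 * z) := by
    linear_combination z * hτ
  rw [hfactor]
  field_simp
  ring

theorem one_div_one_add_goldenConj_sq : 1 / (1 + ψ ^ 2) = (5 + √5) / 10 := by
  have h5 : √5 ^ 2 = 5 := sq_sqrt (by norm_num)
  rw [goldenConj_sq, goldenConj, div_eq_div_iff (by nlinarith [sqrt_nonneg 5]) (by norm_num)]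
  linear_combination (1 / 2 : ℝ) * h5

theorem ptilde_re_gt (τ : ℂ) (hτ : τ = ((1 - Real.sqrt 5) / 2 : ℝ))
    (p : ℂ → ℂ)
    (hp : ∀ z : ℂ, p z = (1 + τ ^ 2 * z ^ 2) / (1 - τ * z - τ ^ 2 * z ^ 2)) :
    ∀ z ∈ Metric.ball (0 : ℂ) 1,
      1 - τ * z - τ ^ 2 * z ^ 2 ≠ 0 → Real.sqrt 5 / 10 < (p z).re := by
  intro z hz _
  rw [mem_ball_zero_iff] at hz
  have hτ_sq : τ ^ 2 = τ + 1 := by rw [hτ]; exact_mod_cast goldenConj_sq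
  have hτψ : τ ^ 2 = ((ψ ^ 2 : ℝ) : ℂ) := by rw [hτ]; push_cast; rfl
  have hψ_pos : 0 < ψ ^ 2 := even_two.pow_pos goldenConj_ne_zero
  have hψ_lt : ψ ^ 2 < 1 := by nlinarith [goldenConj_neg, neg_one_lt_goldenConj]
  have hw : ‖-((ψ ^ 2 : ℝ) : ℂ) * z‖ < ψ ^ 2 := by
    rw [norm_mul, norm_neg, Complex.norm_real, norm_of_nonneg hψ_pos.le]
    exact mul_lt_of_lt_one_right hψ_pos hz
  have h₂ : 1 - τ ^ 2 * z ≠ 0 := by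
    rw [hτψ, sub_eq_add_neg, ← neg_mul]
    exact Complex.one_add_ne_zero_of_norm_lt_one (hw.trans hψ_lt)
  have hre : (p z).re = -1 + ((1 + z)⁻¹).re + ((1 + -((ψ ^ 2 : ℝ) : ℂ) * z)⁻¹).re := by
    rw [hp, div_eq_partial_fractions_of_sq_eq_add_one hτ_sq
      (Complex.one_add_ne_zero_of_norm_lt_one hz) h₂, hτψ, sub_eq_add_neg (1 : ℂ), ← neg_mul]
    simp only [Complex.add_re, Complex.neg_re, Complex.one_re]
  have hz_term : 1 / 2 < ((1 + z)⁻¹).re := by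
    simpa [one_add_one_eq_two] using Complex.one_div_one_add_lt_re_inv_one_add hz le_rfl
  have hτz_term := Complex.one_div_one_add_lt_re_inv_one_add hw hψ_lt.le
  rw [one_div_one_add_goldenConj_sq] at hτz_term
  linarith
end
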